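/- arXiv:1703.10897 — 5 statements merged into one kernel-verified Lean document; each statement's English description precedes it below -/
import Mathlib

section
/- The refined egalitarian solution is independent of perfect objects: for every MAP (R,q), every agent i, and every perfect extension ([R R_{k'}], q̄) of (R,q) for agent i, we have φ^{ES*}_i([R R_{k'}], q̄) = φ^{ES*}_i(R,q) + 1. -/
open Finset

/-- A multi-unit assignment problem (MAP): `n` agents (indexed by `Fin n`),
a finite set `M` of objects, integer capacities `q` with `q k ≥ 1`, and a
Boolean acceptability matrix `r` with `q k ≤ |{i : r i k = 1}|` for each object. -/
structure MAP (n : ℕ) (M : Type*) [Fintype M] where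
  r : Fin n → M → Bool
  q : M → ℕ
  q_pos : ∀ k, 1 ≤ q k
  enough : ∀ k, q k ≤ (Finset.univ.filter fun i => r i k = true).card

variable {n : ℕ} {M : Type*} [Fintype M]

/-- `Z` is a random assignment matrix (RAM) for the MAP `P`. -/
def IsRAM (P : MAP n M) (Z : Fin n → M → ℝ) : Prop :=
  (∀ i k, 0 ≤ Z i k) ∧ (∀ i k, Z i k ≤ 1) ∧
  (∀ k, ∑ i, Z i k ≤ (P.q k : ℝ)) ∧
  (∀ i k, 0 < Z i k → P.r i k = true)

/-- Utility of agent `i` at assignment `Z`: expected number of objects received. -/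
noncomputable def util (Z : Fin n → M → ℝ) (i : Fin n) : ℝ := ∑ k, Z i k

/-- The set `U(R,q)` of efficient utility profiles. -/
def effU (P : MAP n M) : Set (Fin n → ℝ) :=
  {U | ∃ Z, IsRAM P Z ∧ (∑ i, util Z i) = (∑ k, (P.q k : ℝ)) ∧ ∀ i, U i = util Z i}

/-- The coordinates of `U` sorted in ascending order: `γ(U)`. -/
noncomputable def sortedVec (U : Fin n → ℝ) : Fin n → ℝ := U ∘ Tuple.sort U

/-- Lexicographic (weak) comparison of vectors. -/
def lexLE (U V : Fin n → ℝ) : Prop :=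
  U = V ∨ ∃ i, U i < V i ∧ ∀ j, j < i → U j = V j

/-- Leximin comparison: compare ascending-sorted vectors lexicographically. -/
def leximinLE (U V : Fin n → ℝ) : Prop := lexLE (sortedVec U) (sortedVec V)

/-- `U` is a leximin-maximal element of the set of efficient utility profiles of `P`.
(The unique such element is the egalitarian solution `φ^ES(P)`.) -/
def LeximinMaximal (P : MAP n M) (U : Fin n → ℝ) : Prop :=
  U ∈ effU P ∧ ∀ U' ∈ effU P, leximinLE U U' → leximinLE U' U

/-- Sum of the `t` smallest coordinates of `U`. -/
noncomputable def lorenzSum (U : Fin n → ℝ) (t : ℕ) : ℝ :=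
  ∑ i ∈ Finset.univ.filter (fun i : Fin n => (i : ℕ) < t), sortedVec U i

/-- `z` lies in agent `i`'s budget set at prices `p`. -/
def InBudget (P : MAP n M) (p : M → ℝ) (i : Fin n) (z : M → ℝ) : Prop :=
  (∀ k, 0 ≤ z k) ∧ (∀ k, z k ≤ 1) ∧ (∀ k, 0 < z k → P.r i k = true) ∧
  (∑ k, p k * z k ≤ 1)

/-- `(Z, p)` is a constrained competitive equilibrium (CCE) of `P`. -/
def IsCCE (P : MAP n M) (Z : Fin n → M → ℝ) (p : M → ℝ) : Prop :=
  IsRAM P Z ∧ (∀ k, 0 ≤ p k) ∧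
  ∀ i, InBudget P p i (Z i) ∧ ∀ z, InBudget P p i z → (∑ k, z k) ≤ util Z i

/-- Object `k` is over-demanded: its total demand strictly exceeds its capacity. -/
def Overdemanded (P : MAP n M) (k : M) : Prop :=
  P.q k < (Finset.univ.filter fun i => P.r i k = true).card

instance (P : MAP n M) : DecidablePred (Overdemanded P) :=
  fun _ => Nat.decLt _ _

/-- The restriction of the MAP `P` to its over-demanded objects. -/
def restrictO (P : MAP n M) : MAP n {k : M // Overdemanded P k} where
  r := fun i k => P.r i k.1
  q := fun k => P.q k.1
  q_pos := fun k => P.q_pos k.1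
  enough := fun k => P.enough k.1

/-- Number of perfect objects that agent `i` finds acceptable. -/
def perfectCount (P : MAP n M) (i : Fin n) : ℕ :=
  (Finset.univ.filter fun k => ¬ Overdemanded P k ∧ P.r i k = true).card

/-- `P'` is a perfect extension of `P` for agent `i`: it adjoins one new object
(`none`) acceptable to `i`, with capacity equal to its total demand, keeping
everything else unchanged. -/
def IsPerfectExtension (P : MAP n M) (P' : MAP n (Option M)) (i : Fin n) : Prop :=
  (∀ j k, P'.r j (some k) = P.r j k) ∧
  (∀ k, P'.q (some k) = P.q k) ∧
  P'.r i none = true ∧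
  P'.q none = (Finset.univ.filter fun j => P'.r j none = true).card

/-- Extend an assignment by giving each agent accepting the new object one full unit of it. -/
noncomputable def extendZ (P' : MAP n (Option M)) (Z : Fin n → M → ℝ) :
    Fin n → Option M → ℝ :=
  fun j k => match k with
    | none => if P'.r j none = true then (1 : ℝ) else 0
    | some k' => Z j k'

/-- Extend a price vector by pricing the new object at zero. -/
def extendP (p : M → ℝ) : Option M → ℝ :=
  fun k => match k with
    | none => 0
    | some k' => p k'

/-- The serial dictatorship (priority) assignment: agents are processed in the order
`σ 0, σ 1, …`; agent `i` receives one unit of object `k` iff she reports `k`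
acceptable and fewer than `q k` earlier agents report `k` acceptable. -/
noncomputable def SD (P : MAP n M) (σ : Equiv.Perm (Fin n)) (i : Fin n) (k : M) : ℝ :=
  if P.r i k = true ∧
      (Finset.univ.filter fun j : Fin n => σ.symm j < σ.symm i ∧ P.r j k = true).card < P.q k
  then 1 else 0

/-- Utility of agent `i` at assignment `Z`, counting only objects acceptable
under the (true) matrix of `P`. -/
noncomputable def trueUtil (P : MAP n M) (Z : Fin n → M → ℝ) (i : Fin n) : ℝ :=
  ∑ k ∈ Finset.univ.filter (fun k => P.r i k = true), Z i k

/-- The coalitional value `μ(S) = Σ_k min(|{i ∈ S : r i k = 1}|, q k)`. -/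
def coalValue (q : M → ℕ) (r : Fin n → M → Bool) (S : Finset (Fin n)) : ℕ :=
  ∑ k, min ((S.filter fun i => r i k = true).card) (q k)



lemma lexLE_total (U V : Fin n → ℝ) : lexLE U V ∨ lexLE V U := by
  by_cases h : U = V
  · exact Or.inl (Or.inl h)
  · have hne : (Finset.univ.filter fun j : Fin n => U j ≠ V j).Nonempty := by
      by_contra hc
      rw [Finset.not_nonempty_iff_eq_empty] at hc
      apply h
      funext j
      by_contra hj
      have : j ∈ Finset.univ.filter fun j : Fin n => U j ≠ V j := by simp [hj]
      simp [hc] at this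
    set D := Finset.univ.filter fun j : Fin n => U j ≠ V j with hD
    have hi0 : U (D.min' hne) ≠ V (D.min' hne) := by
      have := D.min'_mem hne
      simp only [hD, Finset.mem_filter] at this
      exact this.2
    have hbefore : ∀ j, j < D.min' hne → U j = V j := by
      intro j hj
      by_contra hj'
      have : D.min' hne ≤ j := D.min'_le j (by simp [hD, hj'])
      exact absurd hj (not_lt.mpr this)
    rcases lt_or_gt_of_ne hi0 with hlt | hgt
    · exact Or.inl (Or.inr ⟨D.min' hne, hlt, hbefore⟩)
    · exact Or.inr (Or.inr ⟨D.min' hne, hgt, fun j hj => (hbefore j hj).symm⟩)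

lemma lexLE_antisymm {U V : Fin n → ℝ} (h1 : lexLE U V) (h2 : lexLE V U) : U = V := by
  rcases h1 with h1 | ⟨i, hi, hbi⟩
  · exact h1
  rcases h2 with h2 | ⟨i', hi', hbi'⟩
  · exact h2.symm
  exfalso
  rcases lt_trichotomy i i' with h | h | h
  · have := hbi' i h; linarith
  · subst h; linarith
  · have := hbi i' h; linarith

lemma strictMono_fin_le {t m : ℕ} {f : Fin t → Fin m} (hf : StrictMono f) (a : Fin t) :
    (a : ℕ) ≤ (f a : ℕ) := by
  suffices h : ∀ v : ℕ, ∀ a : Fin t, (a : ℕ) = v → v ≤ (f a : ℕ) from h _ a rfl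
  intro v
  induction v with
  | zero => intro a _; omega
  | succ v ih =>
    intro a ha
    have hb : v < t := by omega
    have h1 := ih ⟨v, hb⟩ rfl
    have h2 : f ⟨v, hb⟩ < f a := hf (by rw [Fin.lt_def]; simp; omega)
    rw [Fin.lt_def] at h2
    omega

lemma filter_lt_eq_map {t : ℕ} (ht : t ≤ n) :
    Finset.univ.filter (fun j : Fin n => (j : ℕ) < t) =
      Finset.univ.map (Fin.castLEEmb ht) := by
  ext j
  simp only [Finset.mem_filter, Finset.mem_univ, true_and, Finset.mem_map]
  constructor
  · intro hj
    exact ⟨⟨(j : ℕ), hj⟩, by ext; simp⟩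
  · rintro ⟨a, rfl⟩
    simpa [Fin.castLEEmb] using a.2

lemma sum_first_le {g : Fin n → ℝ} (hg : Monotone g) (S : Finset (Fin n)) {t : ℕ}
    (hS : S.card = t) :
    ∑ j ∈ Finset.univ.filter (fun j : Fin n => (j : ℕ) < t), g j ≤ ∑ j ∈ S, g j := by
  have ht : t ≤ n := by
    rw [← hS]
    simpa using Finset.card_le_card (Finset.subset_univ S)
  have hSmap : S = Finset.univ.map ((S.orderEmbOfFin hS).toEmbedding) := by
    ext x
    simp only [Finset.mem_map, Finset.mem_univ, true_and]
    constructor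
    · intro hx
      have : x ∈ Set.range (S.orderEmbOfFin hS) := by
        rw [Finset.range_orderEmbOfFin]; exact hx
      obtain ⟨a, ha⟩ := this
      exact ⟨a, ha⟩
    · rintro ⟨a, rfl⟩
      exact Finset.orderEmbOfFin_mem S hS a
  rw [filter_lt_eq_map ht]
  conv_rhs => rw [hSmap]
  rw [Finset.sum_map, Finset.sum_map]
  apply Finset.sum_le_sum
  intro a _
  apply hg
  rw [Fin.le_def]
  simp only [Fin.castLEEmb, Function.Embedding.coeFn_mk, Fin.coe_castLE]
  exact strictMono_fin_le (S.orderEmbOfFin hS).strictMono a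

lemma lorenzSum_le_sum (U : Fin n → ℝ) (S : Finset (Fin n)) {t : ℕ} (hS : S.card = t) :
    lorenzSum U t ≤ ∑ i ∈ S, U i := by
  unfold lorenzSum sortedVec
  have hmap : ∑ i ∈ S, U i = ∑ j ∈ S.map (Tuple.sort U).symm.toEmbedding,
      (U ∘ Tuple.sort U) j := by
    rw [Finset.sum_map]
    apply Finset.sum_congr rfl
    intro x _
    simp
  rw [hmap]
  exact sum_first_le (Tuple.monotone_sort U) _ (by rw [Finset.card_map, hS])

lemma lorenzSum_achieved (U : Fin n → ℝ) {t : ℕ} (ht : t ≤ n) :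
    ∃ S : Finset (Fin n), S.card = t ∧ lorenzSum U t = ∑ i ∈ S, U i := by
  refine ⟨(Finset.univ.filter fun j : Fin n => (j : ℕ) < t).map (Tuple.sort U).toEmbedding,
    ?_, ?_⟩
  · rw [Finset.card_map, filter_lt_eq_map ht, Finset.card_map]
    simp
  · rw [Finset.sum_map]
    unfold lorenzSum sortedVec
    rfl

lemma effU_convex_mid {M' : Type*} [Fintype M'] (P : MAP n M') {U V : Fin n → ℝ}
    (hU : U ∈ effU P) (hV : V ∈ effU P) : (fun i => (U i + V i) / 2) ∈ effU P := by
  obtain ⟨Z, ⟨h0, h1, hcap, hacc⟩, hsum, hu⟩ := hU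
  obtain ⟨Z', ⟨h0', h1', hcap', hacc'⟩, hsum', hu'⟩ := hV
  have hutil : ∀ i, util (fun i k => (Z i k + Z' i k) / 2) i = (util Z i + util Z' i) / 2 := by
    intro i
    unfold util
    rw [← Finset.sum_add_distrib, Finset.sum_div]
  refine ⟨fun i k => (Z i k + Z' i k) / 2, ⟨?_, ?_, ?_, ?_⟩, ?_, ?_⟩
  · intro i k; have := h0 i k; have := h0' i k; positivity
  · intro i k; have := h1 i k; have := h1' i k; linarith
  · intro k
    have he : ∑ i, (Z i k + Z' i k) / 2 = (∑ i, Z i k + ∑ i, Z' i k) / 2 := by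
      rw [← Finset.sum_add_distrib, Finset.sum_div]
    rw [he]; have := hcap k; have := hcap' k; linarith
  · intro i k hpos
    by_cases hz : 0 < Z i k
    · exact hacc i k hz
    · push_neg at hz
      exact hacc' i k (by linarith)
  · calc ∑ i, util (fun i k => (Z i k + Z' i k) / 2) i
        = ∑ i, (util Z i + util Z' i) / 2 := Finset.sum_congr rfl fun i _ => hutil i
      _ = (∑ i, util Z i + ∑ i, util Z' i) / 2 := by
          rw [← Finset.sum_add_distrib, Finset.sum_div]
      _ = ∑ k, (P.q k : ℝ) := by rw [hsum, hsum']; ring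
  · intro j
    rw [hutil j, ← hu j, ← hu' j]

lemma sum_sq_mid_lt {U V : Fin n → ℝ} (hne : U ≠ V) :
    ∑ j, ((U j + V j) / 2) ^ 2 < (∑ j, (U j) ^ 2 + ∑ j, (V j) ^ 2) / 2 := by
  have he : (∑ j, (U j) ^ 2 + ∑ j, (V j) ^ 2) / 2 = ∑ j, ((U j) ^ 2 + (V j) ^ 2) / 2 := by
    rw [← Finset.sum_add_distrib, Finset.sum_div]
  rw [he]
  obtain ⟨j0, hj0⟩ : ∃ j, U j ≠ V j := by
    by_contra h; push_neg at h; exact hne (funext h)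
  apply Finset.sum_lt_sum
  · intro j _; nlinarith [sq_nonneg (U j - V j)]
  · refine ⟨j0, Finset.mem_univ j0, ?_⟩
    have h1 : (0:ℝ) < (U j0 - V j0) ^ 2 := by
      have := sub_ne_zero.mpr hj0
      positivity
    nlinarith

lemma leximinMaximal_unique {M' : Type*} [Fintype M'] (P : MAP n M') {U V : Fin n → ℝ}
    (hU : LeximinMaximal P U) (hV : LeximinMaximal P V) : U = V := by
  have hUV : leximinLE U V ∧ leximinLE V U := by
    rcases lexLE_total (sortedVec U) (sortedVec V) with h | h
    · exact ⟨h, hU.2 V hV.1 h⟩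
    · exact ⟨hV.2 U hU.1 h, h⟩
  have hsort : sortedVec U = sortedVec V := lexLE_antisymm hUV.1 hUV.2
  by_contra hne
  set W : Fin n → ℝ := fun i => (U i + V i) / 2 with hWdef
  have hWmem : W ∈ effU P := effU_convex_mid P hU.1 hV.1
  have hsq : ∑ j, (sortedVec W j) ^ 2 < ∑ j, (sortedVec U j) ^ 2 := by
    have e1 : ∑ j, (sortedVec W j) ^ 2 = ∑ j, (W j) ^ 2 :=
      Equiv.sum_comp (Tuple.sort W) (fun j => (W j) ^ 2)
    have e2 : ∑ j, (sortedVec U j) ^ 2 = ∑ j, (U j) ^ 2 :=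
      Equiv.sum_comp (Tuple.sort U) (fun j => (U j) ^ 2)
    have e3 : ∑ j, (sortedVec V j) ^ 2 = ∑ j, (V j) ^ 2 :=
      Equiv.sum_comp (Tuple.sort V) (fun j => (V j) ^ 2)
    have e4 : ∑ j, (sortedVec U j) ^ 2 = ∑ j, (sortedVec V j) ^ 2 := by rw [hsort]
    have h5 := sum_sq_mid_lt hne
    rw [e1, e2]
    have : ∑ j, (W j) ^ 2 = ∑ j, ((U j + V j) / 2) ^ 2 := rfl
    rw [this]
    linarith [e2, e3, e4]
  have hsne : sortedVec W ≠ sortedVec U := fun h => by rw [h] at hsq; exact lt_irrefl _ hsq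
  have hlor : ∀ t : ℕ, t ≤ n → lorenzSum U t ≤ lorenzSum W t := by
    intro t ht
    obtain ⟨S, hScard, hSeq⟩ := lorenzSum_achieved W ht
    have hsplit : ∑ x ∈ S, W x = (∑ x ∈ S, U x + ∑ x ∈ S, V x) / 2 := by
      rw [← Finset.sum_add_distrib, Finset.sum_div]
    have h1 := lorenzSum_le_sum U S hScard
    have h2 := lorenzSum_le_sum V S hScard
    have hV2 : lorenzSum V t = lorenzSum U t := by unfold lorenzSum; rw [hsort]
    rw [hSeq, hsplit]
    linarith
  have hDne : (Finset.univ.filter fun j : Fin n => sortedVec W j ≠ sortedVec U j).Nonempty := by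
    by_contra hc
    rw [Finset.not_nonempty_iff_eq_empty] at hc
    apply hsne
    funext j
    by_contra hj
    have : j ∈ Finset.univ.filter fun j : Fin n => sortedVec W j ≠ sortedVec U j := by simp [hj]
    simp [hc] at this
  set D := Finset.univ.filter fun j : Fin n => sortedVec W j ≠ sortedVec U j with hD
  set j0 := D.min' hDne with hj0def
  have hdiff : sortedVec W j0 ≠ sortedVec U j0 := by
    have := D.min'_mem hDne
    simp only [hD, Finset.mem_filter] at this
    exact this.2
  have hbef : ∀ j, j < j0 → sortedVec W j = sortedVec U j := by
    intro j hj
    by_contra hj'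
    have : j0 ≤ j := D.min'_le j (by simp [hD, hj'])
    exact absurd hj (not_lt.mpr this)
  have hle : sortedVec U j0 ≤ sortedVec W j0 := by
    have h1 := hlor ((j0 : ℕ) + 1) j0.isLt
    have heq0 : lorenzSum W (j0 : ℕ) = lorenzSum U (j0 : ℕ) := by
      unfold lorenzSum
      apply Finset.sum_congr rfl
      intro j hj
      simp only [Finset.mem_filter, Finset.mem_univ, true_and] at hj
      exact hbef j (by rwa [Fin.lt_def])
    have hins : ∀ X : Fin n → ℝ,
        lorenzSum X ((j0 : ℕ) + 1) = lorenzSum X (j0 : ℕ) + sortedVec X j0 := by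
      intro X
      unfold lorenzSum
      have hset : Finset.univ.filter (fun j : Fin n => (j : ℕ) < (j0 : ℕ) + 1) =
          insert j0 (Finset.univ.filter (fun j : Fin n => (j : ℕ) < (j0 : ℕ))) := by
        ext j
        simp only [Finset.mem_filter, Finset.mem_univ, true_and, Finset.mem_insert]
        constructor
        · intro hj
          rcases Nat.lt_succ_iff_lt_or_eq.mp hj with h | h
          · exact Or.inr h
          · exact Or.inl (Fin.ext h)
        · rintro (rfl | hj) <;> omega
      rw [hset, Finset.sum_insert (by simp)]
      ring
    rw [hins U, hins W, heq0] at h1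
    linarith
  have hlt : sortedVec U j0 < sortedVec W j0 := lt_of_le_of_ne hle (Ne.symm hdiff)
  have hUW : leximinLE U W := Or.inr ⟨j0, hlt, fun j hj => (hbef j hj).symm⟩
  have hWU := hU.2 W hWmem hUW
  rcases hWU with h | ⟨i, hi, hbi⟩
  · exact hsne h
  · rcases lt_trichotomy i j0 with h | h | h
    · have := hbef i h; linarith
    · subst h; linarith
    · exact hdiff (hbi j0 h)

lemma effU_subset_of_equiv {M₁ M₂ : Type*} [Fintype M₁] [Fintype M₂]
    (P₁ : MAP n M₁) (P₂ : MAP n M₂) (e : M₁ ≃ M₂)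
    (hr : ∀ i k, P₂.r i (e k) = P₁.r i k) (hq : ∀ k, P₂.q (e k) = P₁.q k) :
    effU P₁ ⊆ effU P₂ := by
  rintro U0 ⟨Z, ⟨h0, h1, hcap, hacc⟩, hsum, hu⟩
  have hutil : ∀ j, util (fun j k => Z j (e.symm k)) j = util Z j := by
    intro j
    unfold util
    exact Equiv.sum_comp e.symm (Z j)
  refine ⟨fun j k => Z j (e.symm k), ⟨fun j k => h0 _ _, fun j k => h1 _ _, ?_, ?_⟩, ?_, ?_⟩
  · intro k
    have hqq : P₂.q k = P₁.q (e.symm k) := by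
      conv_lhs => rw [← e.apply_symm_apply k]
      exact hq _
    rw [hqq]
    exact hcap (e.symm k)
  · intro j k hpos
    have h2 : P₂.r j k = P₁.r j (e.symm k) := by
      conv_lhs => rw [← e.apply_symm_apply k]
      exact hr j _
    rw [h2]
    exact hacc j (e.symm k) hpos
  · have hqsum : ∑ k, (P₂.q k : ℝ) = ∑ k, (P₁.q k : ℝ) := by
      rw [← Equiv.sum_comp e (fun k => (P₂.q k : ℝ))]
      exact Finset.sum_congr rfl fun k _ => by rw [hq]
    calc ∑ j, util (fun j k => Z j (e.symm k)) j
        = ∑ j, util Z j := Finset.sum_congr rfl fun j _ => hutil j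
      _ = ∑ k, (P₁.q k : ℝ) := hsum
      _ = ∑ k, (P₂.q k : ℝ) := hqsum.symm
  · intro j
    rw [hu j, hutil j]

def odEquiv (P : MAP n M) (P' : MAP n (Option M))
    (hsome : ∀ k : M, Overdemanded P' (some k) ↔ Overdemanded P k)
    (hnone : ¬ Overdemanded P' none) :
    {k : M // Overdemanded P k} ≃ {k : Option M // Overdemanded P' k} where
  toFun k := ⟨some k.1, (hsome k.1).mpr k.2⟩
  invFun k := match k with
    | ⟨some k, h⟩ => ⟨k, (hsome k).mp h⟩
    | ⟨none, h⟩ => absurd h hnone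
  left_inv k := rfl
  right_inv k := by
    match k with
    | ⟨some k, h⟩ => rfl
    | ⟨none, h⟩ => exact absurd h hnone


/-- The refined egalitarian solution `φ^{ES*}` (egalitarian solution
of the over-demanded subproblem plus the number of acceptable perfect objects) is
independent of perfect objects. -/
theorem refined_es_ipo {n : ℕ} {M : Type*} [Fintype M] (P : MAP n M)
    (P' : MAP n (Option M)) (i : Fin n) (hext : IsPerfectExtension P P' i)
    (U : Fin n → ℝ) (hU : LeximinMaximal (restrictO P) U)
    (U' : Fin n → ℝ) (hU' : LeximinMaximal (restrictO P') U') :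
    U' i + (perfectCount P' i : ℝ) = (U i + (perfectCount P i : ℝ)) + 1 := by
  obtain ⟨hre, hqe, hri, hqn⟩ := hext
  have hsome : ∀ k : M, Overdemanded P' (some k) ↔ Overdemanded P k := by
    intro k
    unfold Overdemanded
    rw [hqe k]
    have hfil : (Finset.univ.filter fun j : Fin n => P'.r j (some k) = true) =
        (Finset.univ.filter fun j : Fin n => P.r j k = true) := by
      apply Finset.filter_congr
      intro j _
      rw [hre j k]
    rw [hfil]
  have hnone : ¬ Overdemanded P' none := by
    unfold Overdemanded
    rw [hqn]
    exact lt_irrefl _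
  set e := odEquiv P P' hsome hnone with he
  have hrOD : ∀ (j : Fin n) (k : {k : M // Overdemanded P k}),
      (restrictO P').r j (e k) = (restrictO P).r j k := fun j k => hre j k.1
  have hqOD : ∀ k : {k : M // Overdemanded P k},
      (restrictO P').q (e k) = (restrictO P).q k := fun k => hqe k.1
  have hEset : effU (restrictO P) = effU (restrictO P') := by
    apply Set.Subset.antisymm
    · exact effU_subset_of_equiv _ _ e hrOD hqOD
    · refine effU_subset_of_equiv _ _ e.symm ?_ ?_
      · intro j k
        conv_rhs => rw [← e.apply_symm_apply k]
        exact (hrOD j (e.symm k)).symm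
      · intro k
        conv_rhs => rw [← e.apply_symm_apply k]
        exact (hqOD (e.symm k)).symm
  have hU'2 : LeximinMaximal (restrictO P) U' := by
    unfold LeximinMaximal
    rw [hEset]
    exact hU'
  have hUU' : U = U' := leximinMaximal_unique _ hU hU'2
  have hpc : perfectCount P' i = perfectCount P i + 1 := by
    unfold perfectCount
    rw [Finset.card_filter, Finset.card_filter, Fintype.sum_option]
    have h1 : (if ¬ Overdemanded P' none ∧ P'.r i none = true then 1 else 0) = 1 :=
      if_pos ⟨hnone, hri⟩
    have h2 : ∀ k : M, (if ¬ Overdemanded P' (some k) ∧ P'.r i (some k) = true then 1 else 0) =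
        (if ¬ Overdemanded P k ∧ P.r i k = true then (1:ℕ) else 0) := by
      intro k
      congr 1
      simp [hsome k, hre i k]
    rw [h1]
    rw [Finset.sum_congr rfl fun k _ => h2 k]
    omega
  rw [hpc, ← hUU']
  push_cast
  ring
end

section
/- The refined egalitarian solution is envy-free: for every MAP (R,q) and agents i, j ∈ N, if r i k ≤ r j k for every k ∈ M, then φ^{ES*}_i(R,q) ≤ φ^{ES*}_j(R,q). -/
open Finset

variable {n : ℕ} {M : Type*} [Fintype M]

section EnvyAux

open Finset

variable {N : ℕ}

lemma lexLE_total' (s s' : Fin N → ℝ) : lexLE s s' ∨ lexLE s' s := by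
  by_cases h : s = s'
  · exact Or.inl (Or.inl h)
  · have hne : (Finset.univ.filter fun t => s t ≠ s' t).Nonempty := by
      rcases Function.ne_iff.1 h with ⟨t, ht⟩
      exact ⟨t, Finset.mem_filter.2 ⟨Finset.mem_univ t, ht⟩⟩
    set m := (Finset.univ.filter fun t => s t ≠ s' t).min' hne with hm
    have hmne : s m ≠ s' m :=
      (Finset.mem_filter.1 ((Finset.univ.filter fun t => s t ≠ s' t).min'_mem hne)).2
    have hpre : ∀ t, t < m → s t = s' t := by
      intro t ht
      by_contra hc
      exact absurd (Finset.min'_le _ t (Finset.mem_filter.2 ⟨Finset.mem_univ t, hc⟩)) (not_le.2 ht)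
    rcases lt_trichotomy (s m) (s' m) with hlt | heq | hgt
    · exact Or.inl (Or.inr ⟨m, hlt, hpre⟩)
    · exact absurd heq hmne
    · exact Or.inr (Or.inr ⟨m, hgt, fun t ht => (hpre t ht).symm⟩)

lemma lexLE_antisymm' {s s' : Fin N → ℝ} (h1 : lexLE s s') (h2 : lexLE s' s) : s = s' := by
  rcases h1 with h1 | ⟨a, ha, hpa⟩
  · exact h1
  rcases h2 with h2 | ⟨b, hb, hpb⟩
  · exact h2.symm
  rcases lt_trichotomy a b with h | h | h
  · exact absurd (ha.trans_le (hpb a h).le) (lt_irrefl _)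
  · subst h
    exact absurd (ha.trans hb) (lt_irrefl _)
  · exact absurd (hb.trans_le (hpa b h).le) (lt_irrefl _)

lemma cnt_comp' (U : Fin N → ℝ) (σ : Equiv.Perm (Fin N)) (v : ℝ) :
    (Finset.univ.filter fun t => U (σ t) ≤ v).card
      = (Finset.univ.filter fun t => U t ≤ v).card := by
  rw [Finset.card_filter, Finset.card_filter]
  exact Equiv.sum_comp σ (fun t => if U t ≤ v then 1 else 0)

lemma sval_comp' (U : Fin N → ℝ) (σ : Equiv.Perm (Fin N)) (v : ℝ) :
    (∑ t ∈ Finset.univ.filter (fun t => U (σ t) ≤ v), U (σ t))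
      = ∑ t ∈ Finset.univ.filter (fun t => U t ≤ v), U t := by
  rw [Finset.sum_filter, Finset.sum_filter]
  exact Equiv.sum_comp σ (fun t => if U t ≤ v then U t else 0)

lemma sortedVec_apply (U : Fin N → ℝ) (t : Fin N) :
    sortedVec U t = U (Tuple.sort U t) := rfl

lemma monotone_sortedVec (U : Fin N → ℝ) : Monotone (sortedVec U) :=
  Tuple.monotone_sort U

lemma cnt_sortedVec (U : Fin N → ℝ) (v : ℝ) :
    (Finset.univ.filter fun t => sortedVec U t ≤ v).card
      = (Finset.univ.filter fun t => U t ≤ v).card :=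
  cnt_comp' U (Tuple.sort U) v

lemma sval_sortedVec (U : Fin N → ℝ) (v : ℝ) :
    (∑ t ∈ Finset.univ.filter (fun t => sortedVec U t ≤ v), sortedVec U t)
      = ∑ t ∈ Finset.univ.filter (fun t => U t ≤ v), U t :=
  sval_comp' U (Tuple.sort U) v

/-- Pigou–Dalton transfer strictly improves leximin. -/
lemma pd_lemma (U U' : Fin N → ℝ) (i j : Fin N) (δ : ℝ) (hδ : 0 < δ)
    (hgap : U j + δ ≤ U i - δ)
    (hU'i : U' i = U i - δ) (hU'j : U' j = U j + δ)
    (hoth : ∀ t, t ≠ i → t ≠ j → U' t = U t) :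
    leximinLE U U' ∧ ¬ leximinLE U' U := by
  have hij : i ≠ j := by
    rintro rfl
    linarith
  set a := U j with ha
  set b := U i with hb
  have hab : a + δ ≤ b - δ := hgap
  set s := sortedVec U with hs
  set s' := sortedVec U' with hs'
  have hms : Monotone s := monotone_sortedVec U
  have hms' : Monotone s' := monotone_sortedVec U'
  -- s ≠ s' : counting values ≤ a
  have hsne : s ≠ s' := by
    intro hcontra
    have h1 : (Finset.univ.filter fun t => U t ≤ a)
        = insert j (Finset.univ.filter fun t => U' t ≤ a) := by
      ext t
      simp only [Finset.mem_filter, Finset.mem_univ, true_and, Finset.mem_insert]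
      rcases eq_or_ne t j with rfl | htj
      · simp [hU'j, ha]
      · rcases eq_or_ne t i with rfl | hti
        · rw [hU'i]
          constructor
          · intro h; linarith
          · rintro (h | h)
            · exact absurd h htj
            · linarith
        · rw [hoth t hti htj]
          constructor
          · exact Or.inr
          · rintro (h | h)
            · exact absurd h htj
            · exact h
    have h2 : j ∉ (Finset.univ.filter fun t => U' t ≤ a) := by
      simp only [Finset.mem_filter, Finset.mem_univ, true_and, hU'j, not_le]
      linarith
    have h3 : (Finset.univ.filter fun t => U t ≤ a).card
        = (Finset.univ.filter fun t => U' t ≤ a).card + 1 := by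
      rw [h1, Finset.card_insert_of_notMem h2]
    have h4 := cnt_sortedVec U a
    have h5 := cnt_sortedVec U' a
    rw [← hs] at h4
    rw [← hs'] at h5
    rw [hcontra, h5] at h4
    omega
  have hDne : (Finset.univ.filter fun t => s t ≠ s' t).Nonempty := by
    rcases Function.ne_iff.1 hsne with ⟨t, ht⟩
    exact ⟨t, Finset.mem_filter.2 ⟨Finset.mem_univ t, ht⟩⟩
  set m := (Finset.univ.filter fun t => s t ≠ s' t).min' hDne with hmdef
  have hmne : s m ≠ s' m :=
    (Finset.mem_filter.1 ((Finset.univ.filter fun t => s t ≠ s' t).min'_mem hDne)).2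
  have hpre : ∀ t, t < m → s t = s' t := by
    intro t ht
    by_contra hc
    exact absurd (Finset.min'_le _ t (Finset.mem_filter.2 ⟨Finset.mem_univ t, hc⟩)) (not_le.2 ht)
  have hlt : s m < s' m := by
    rcases lt_trichotomy (s m) (s' m) with h | h | h
    · exact h
    · exact absurd h hmne
    -- contradiction case : s' m < s m
    · exfalso
      set v := s' m with hv
      -- count bounds
      have hcntU : (Finset.univ.filter fun t => U t ≤ v).card ≤ (m : ℕ) := by
        rw [← cnt_sortedVec U v, ← hs]
        calc (Finset.univ.filter fun t => s t ≤ v).card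
            ≤ (Finset.Iio m).card := by
              apply Finset.card_le_card
              intro t ht
              rw [Finset.mem_Iio]
              by_contra hc
              push_neg at hc
              have := hms hc
              have h2 := (Finset.mem_filter.1 ht).2
              exact absurd (h2.trans_lt h) (not_lt.2 this)
          _ = (m : ℕ) := Fin.card_Iio m
      have hcntU' : (m : ℕ) + 1 ≤ (Finset.univ.filter fun t => U' t ≤ v).card := by
        rw [← cnt_sortedVec U' v, ← hs']
        calc (m : ℕ) + 1 = (Finset.Iic m).card := (Fin.card_Iic m).symm
          _ ≤ (Finset.univ.filter fun t => s' t ≤ v).card := by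
              apply Finset.card_le_card
              intro t ht
              rw [Finset.mem_Iic] at ht
              exact Finset.mem_filter.2 ⟨Finset.mem_univ t, hms' ht⟩
      -- b - δ ≤ v
      have hbdv : b - δ ≤ v := by
        by_contra hc
        push_neg at hc
        have hsub : (Finset.univ.filter fun t => U' t ≤ v)
            ⊆ (Finset.univ.filter fun t => U t ≤ v) := by
          intro t ht
          have ht2 := (Finset.mem_filter.1 ht).2
          refine Finset.mem_filter.2 ⟨Finset.mem_univ t, ?_⟩
          rcases eq_or_ne t i with rfl | hti
          · rw [hU'i] at ht2; linarith
          · rcases eq_or_ne t j with rfl | htj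
            · rw [hU'j] at ht2; linarith
            · rw [← hoth t hti htj]; exact ht2
        have := Finset.card_le_card hsub
        omega
      -- v < b
      have hvb : v < b := by
        by_contra hc
        push_neg at hc
        have hsub : (Finset.univ.filter fun t => U' t ≤ v)
            ⊆ (Finset.univ.filter fun t => U t ≤ v) := by
          intro t ht
          have ht2 := (Finset.mem_filter.1 ht).2
          refine Finset.mem_filter.2 ⟨Finset.mem_univ t, ?_⟩
          rcases eq_or_ne t i with rfl | hti
          · exact hc
          · rcases eq_or_ne t j with rfl | htj
            · rw [hU'j] at ht2; linarith
            · rw [← hoth t hti htj]; exact ht2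
        have := Finset.card_le_card hsub
        omega
      have hav : a + δ ≤ v := hab.trans hbdv
      -- exact filter identity
      have hFU' : (Finset.univ.filter fun t => U' t ≤ v)
          = insert i (Finset.univ.filter fun t => U t ≤ v) := by
        ext t
        simp only [Finset.mem_filter, Finset.mem_univ, true_and, Finset.mem_insert]
        rcases eq_or_ne t i with rfl | hti
        · simp [hU'i]
          linarith
        · rcases eq_or_ne t j with rfl | htj
          · rw [hU'j]
            constructor
            · intro _; right; linarith
            · intro _; linarith
          · rw [hoth t hti htj]
            constructor
            · exact Or.inr
            · rintro (h | h)
              · exact absurd h hti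
              · exact h
      have hinotin : i ∉ (Finset.univ.filter fun t => U t ≤ v) := by
        simp only [Finset.mem_filter, Finset.mem_univ, true_and, not_le]
        linarith
      have hcnt1 : (Finset.univ.filter fun t => U' t ≤ v).card
          = (Finset.univ.filter fun t => U t ≤ v).card + 1 := by
        rw [hFU', Finset.card_insert_of_notMem hinotin]
      have hcUeq : (Finset.univ.filter fun t => U t ≤ v).card = (m : ℕ) := by omega
      have hcU'eq : (Finset.univ.filter fun t => U' t ≤ v).card = (m : ℕ) + 1 := by omega
      -- identify sorted filters
      have hFs : (Finset.univ.filter fun t => s t ≤ v) = Finset.Iio m := by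
        apply Finset.eq_of_subset_of_card_le
        · intro t ht
          rw [Finset.mem_Iio]
          by_contra hc
          push_neg at hc
          have := hms hc
          have h2 := (Finset.mem_filter.1 ht).2
          exact absurd (h2.trans_lt h) (not_lt.2 this)
        · rw [Fin.card_Iio, ← hcUeq, ← cnt_sortedVec U v, ← hs]
      have hFs' : (Finset.univ.filter fun t => s' t ≤ v) = Finset.Iic m := by
        symm
        apply Finset.eq_of_subset_of_card_le
        · intro t ht
          rw [Finset.mem_Iic] at ht
          exact Finset.mem_filter.2 ⟨Finset.mem_univ t, hms' ht⟩
        · rw [Fin.card_Iic]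
          have : (Finset.univ.filter fun t => s' t ≤ v).card = (m : ℕ) + 1 := by
            rw [hs', cnt_sortedVec U' v, hcU'eq]
          omega
      -- sum computation
      have hjin : j ∈ (Finset.univ.filter fun t => U t ≤ v) := by
        simp only [Finset.mem_filter, Finset.mem_univ, true_and]
        linarith
      have hsum1 : (∑ t ∈ Finset.univ.filter (fun t => U' t ≤ v), U' t)
          = (∑ t ∈ Finset.univ.filter (fun t => U t ≤ v), U t) + b := by
        rw [hFU', Finset.sum_insert hinotin, hU'i]
        have : (∑ t ∈ Finset.univ.filter (fun t => U t ≤ v), U' t)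
            = (∑ t ∈ Finset.univ.filter (fun t => U t ≤ v), (U t + if t = j then δ else 0)) := by
          apply Finset.sum_congr rfl
          intro t ht
          have hti : t ≠ i := fun h => hinotin (h ▸ ht)
          rcases eq_or_ne t j with rfl | htj
          · rw [hU'j]; simp [ha]
          · rw [hoth t hti htj]; simp [htj]
        rw [this, Finset.sum_add_distrib, Finset.sum_ite_eq' _ j (fun _ => δ), if_pos hjin]
        ring
      -- transfer to sorted sums
      have hsvs : (∑ t ∈ Finset.univ.filter (fun t => s t ≤ v), s t)
          = ∑ t ∈ Finset.univ.filter (fun t => U t ≤ v), U t := sval_sortedVec U v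
      have hsvs' : (∑ t ∈ Finset.univ.filter (fun t => s' t ≤ v), s' t)
          = ∑ t ∈ Finset.univ.filter (fun t => U' t ≤ v), U' t := sval_sortedVec U' v
      rw [hFs] at hsvs
      rw [hFs'] at hsvs'
      have hiic : (∑ t ∈ Finset.Iic m, s' t) = (∑ t ∈ Finset.Iio m, s' t) + s' m := by
        rw [← Finset.Iio_insert, Finset.sum_insert (by simp : m ∉ Finset.Iio m)]
        ring
      have hpresum : (∑ t ∈ Finset.Iio m, s' t) = ∑ t ∈ Finset.Iio m, s t := by
        apply Finset.sum_congr rfl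
        intro t ht
        exact (hpre t (Finset.mem_Iio.1 ht)).symm
      have : v = b := by
        have e1 : (∑ t ∈ Finset.Iio m, s t)
            = ∑ t ∈ Finset.univ.filter (fun t => U t ≤ v), U t := hsvs
        have e2 : (∑ t ∈ Finset.Iio m, s t) + v
            = (∑ t ∈ Finset.univ.filter (fun t => U t ≤ v), U t) + b := by
          rw [← hsum1, ← hsvs', hiic, hpresum, hv]
        linarith
      linarith
  refine ⟨Or.inr ⟨m, hlt, hpre⟩, ?_⟩
  intro hcon
  have := lexLE_antisymm' (Or.inr ⟨m, hlt, hpre⟩ : lexLE s s') hcon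
  exact hmne (congrFun this m)

end EnvyAux


/-- The refined egalitarian solution is envy-free: if agent `i`'s
acceptable set is contained in agent `j`'s, then `φ^{ES*}_i(R,q) ≤ φ^{ES*}_j(R,q)`. -/
theorem refined_es_envy_free {n : ℕ} {M : Type*} [Fintype M] (P : MAP n M)
    (i j : Fin n) (hij : ∀ k, P.r i k = true → P.r j k = true)
    (U : Fin n → ℝ) (hU : LeximinMaximal (restrictO P) U) :
    U i + (perfectCount P i : ℝ) ≤ U j + (perfectCount P j : ℝ) := by
  classical
  have hpc : perfectCount P i ≤ perfectCount P j := by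
    apply Finset.card_le_card
    intro k hk
    simp only [Finset.mem_filter, Finset.mem_univ, true_and] at *
    exact ⟨hk.1, hij k hk.2⟩
  have hpcR : (perfectCount P i : ℝ) ≤ (perfectCount P j : ℝ) := Nat.cast_le.2 hpc
  by_contra hcon
  push_neg at hcon
  have hUij : U j < U i := by linarith
  have hijne : i ≠ j := by
    rintro rfl
    exact lt_irrefl _ hUij
  obtain ⟨⟨Z, hZram, hEff, hUZ⟩, hmax⟩ := hU
  obtain ⟨hZ0, hZ1, hZq, hZr⟩ := hZram
  -- there is an object giving room for a transfer from i to j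
  have hex : ∃ k0 : {k : M // Overdemanded P k}, 0 < Z i k0 ∧ Z j k0 < 1 := by
    by_contra hno
    push_neg at hno
    have hle : U i ≤ U j := by
      rw [hUZ i, hUZ j]
      unfold util
      have hsub : (∑ k, Z i k) = ∑ k ∈ Finset.univ.filter (fun k => 0 < Z i k), Z i k := by
        symm
        apply Finset.sum_subset (Finset.filter_subset _ _)
        intro k _ hk
        simp only [Finset.mem_filter, Finset.mem_univ, true_and, not_lt] at hk
        exact le_antisymm hk (hZ0 i k)
      rw [hsub]
      calc (∑ k ∈ Finset.univ.filter (fun k => 0 < Z i k), Z i k)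
          ≤ ∑ k ∈ Finset.univ.filter (fun k => 0 < Z i k), Z j k := by
            apply Finset.sum_le_sum
            intro k hk
            simp only [Finset.mem_filter, Finset.mem_univ, true_and] at hk
            exact (hZ1 i k).trans (hno k hk)
        _ ≤ ∑ k, Z j k := by
            apply Finset.sum_le_sum_of_subset_of_nonneg (Finset.filter_subset _ _)
            intro k _ _
            exact hZ0 j k
    exact absurd hUij (not_lt.2 hle)
  obtain ⟨k0, hik0, hjk0⟩ := hex
  set δ : ℝ := min (min (Z i k0) (1 - Z j k0)) ((U i - U j) / 2) with hδdef
  have hδ : 0 < δ := lt_min (lt_min hik0 (by linarith)) (by linarith)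
  have hδ1 : δ ≤ Z i k0 := (min_le_left _ _).trans (min_le_left _ _)
  have hδ2 : δ ≤ 1 - Z j k0 := (min_le_left _ _).trans (min_le_right _ _)
  have hδ3 : δ ≤ (U i - U j) / 2 := min_le_right _ _
  set c : Fin n → ℝ := fun t => if t = i then -δ else if t = j then δ else 0 with hcdef
  set Z' : Fin n → {k : M // Overdemanded P k} → ℝ :=
    fun t k => Z t k + (if k = k0 then c t else 0) with hZ'def
  have hcsum : (∑ t, c t) = 0 := by
    have hsplit : ∀ t : Fin n, c t = (if t = i then -δ else 0) + (if t = j then δ else 0) := by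
      intro t
      rw [hcdef]
      rcases eq_or_ne t i with rfl | h1
      · simp [hijne]
      · rcases eq_or_ne t j with rfl | h2
        · simp [h1]
        · simp [h1, h2]
    rw [Finset.sum_congr rfl (fun t _ => hsplit t), Finset.sum_add_distrib,
      Finset.sum_ite_eq' _ i (fun _ => -δ), Finset.sum_ite_eq' _ j (fun _ => δ)]
    simp
  have hrow : ∀ t, util Z' t = util Z t + c t := by
    intro t
    unfold util
    rw [hZ'def]
    simp only
    rw [Finset.sum_add_distrib, Finset.sum_ite_eq' _ k0 (fun _ => c t)]
    simp
  have hcol : ∀ k, (∑ t, Z' t k) = ∑ t, Z t k := by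
    intro k
    rw [hZ'def]
    simp only
    rw [Finset.sum_add_distrib]
    rcases eq_or_ne k k0 with h | hk
    · rw [h]
      simp [hcsum]
    · simp [hk]
  have hci : c i = -δ := by rw [hcdef]; simp
  have hcj : c j = δ := by rw [hcdef]; simp [Ne.symm hijne]
  have hct : ∀ t, t ≠ i → t ≠ j → c t = 0 := by
    intro t h1 h2
    rw [hcdef]
    simp [h1, h2]
  have hZ'ik : Z' i k0 = Z i k0 - δ := by
    rw [hZ'def]
    simp [hci]
    try ring
  have hZ'jk : Z' j k0 = Z j k0 + δ := by
    rw [hZ'def]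
    simp [hcj]
  have hZ'eq : ∀ t k, (t ≠ i ∧ t ≠ j) ∨ k ≠ k0 → Z' t k = Z t k := by
    rintro t k (⟨h1, h2⟩ | h)
    · rw [hZ'def]; simp [hct t h1 h2]
    · rw [hZ'def]; simp [h]
  -- Z' is a RAM
  have hram' : IsRAM (restrictO P) Z' := by
    refine ⟨?_, ?_, ?_, ?_⟩
    · intro t k
      rcases eq_or_ne k k0 with he | hk
      · rw [he]
        rcases eq_or_ne t i with h1 | h1
        · rw [h1, hZ'ik]; linarith
        · rcases eq_or_ne t j with h2 | h2
          · rw [h2, hZ'jk]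
            have := hZ0 j k0
            linarith
          · rw [hZ'eq t k0 (Or.inl ⟨h1, h2⟩)]; exact hZ0 t k0
      · rw [hZ'eq t k (Or.inr hk)]; exact hZ0 t k
    · intro t k
      rcases eq_or_ne k k0 with he | hk
      · rw [he]
        rcases eq_or_ne t i with h1 | h1
        · rw [h1, hZ'ik]
          have := hZ1 i k0
          linarith
        · rcases eq_or_ne t j with h2 | h2
          · rw [h2, hZ'jk]; linarith
          · rw [hZ'eq t k0 (Or.inl ⟨h1, h2⟩)]; exact hZ1 t k0
      · rw [hZ'eq t k (Or.inr hk)]; exact hZ1 t k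
    · intro k
      rw [hcol k]
      exact hZq k
    · intro t k hk
      rcases eq_or_ne k k0 with he | hkk
      · rw [he] at hk ⊢
        rcases eq_or_ne t i with h1 | h1
        · rw [h1] at hk ⊢
          rw [hZ'ik] at hk
          exact hZr i k0 (by linarith)
        · rcases eq_or_ne t j with h2 | h2
          · rw [h2]
            have hri : (restrictO P).r i k0 = true := hZr i k0 hik0
            exact hij k0.1 hri
          · rw [hZ'eq t k0 (Or.inl ⟨h1, h2⟩)] at hk
            exact hZr t k0 hk
      · rw [hZ'eq t k (Or.inr hkk)] at hk
        exact hZr t k hk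
  -- the new utility profile
  set U' : Fin n → ℝ := fun t => util Z' t with hU'def
  have hmem : U' ∈ effU (restrictO P) := by
    refine ⟨Z', hram', ?_, fun t => rfl⟩
    calc (∑ t, util Z' t) = ∑ t, (util Z t + c t) := Finset.sum_congr rfl fun t _ => hrow t
      _ = (∑ t, util Z t) + ∑ t, c t := Finset.sum_add_distrib
      _ = ∑ k, ((restrictO P).q k : ℝ) := by rw [hcsum, add_zero, hEff]
  have hU'i : U' i = U i - δ := by
    rw [hU'def]
    simp only
    rw [hrow i, hci, hUZ i]
    ring
  have hU'j : U' j = U j + δ := by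
    rw [hU'def]
    simp only
    rw [hrow j, hcj, hUZ j]
  have hU'oth : ∀ t, t ≠ i → t ≠ j → U' t = U t := by
    intro t h1 h2
    rw [hU'def]
    simp only
    rw [hrow t, hct t h1 h2, hUZ t, add_zero]
  have hpd := pd_lemma U U' i j δ hδ (by linarith) hU'i hU'j hU'oth
  exact hpd.2 (hmax U' hmem hpd.1)
end

section
/- The refined egalitarian solution is not group strategy-proof: there exist a MAP (R,q), a nonempty coalition S ⊆ N, and a misreport R' (with (R',q) a MAP, r' j k = r j k for j ∉ S and r' i k ≤ r i k for i ∈ S) such that φ^{ES*}_i(R',q) ≥ φ^{ES*}_i(R,q) for all i ∈ S, with strict inequality for at least one i ∈ S. (A witness is the 7-agent, 4-object problem of the paper's Example 3 with S = {a,b,c}, whose misreport creates three artificially perfect objects.) -/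
open Finset

variable {n : ℕ} {M : Type*} [Fintype M]

/-! ### Auxiliary material for Statement 14 -/

/-- If a constant vector is leximin-below `V` and `V` has the same total, then
`V` is leximin-below the constant vector (their sorted versions agree). -/
lemma leximinLE_const_symm {n : ℕ} (c : ℝ) (V : Fin n → ℝ)
    (hsum : ∑ i, V i = n * c) (h : leximinLE (fun _ => c) V) :
    leximinLE V (fun _ => c) := by
  have hconst : sortedVec (fun _ : Fin n => c) = fun _ => c := rfl
  unfold leximinLE at h ⊢
  rw [hconst] at h ⊢
  rcases h with h | ⟨i, hi, hj⟩
  · exact Or.inl h.symm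
  · exfalso
    have hm : Monotone (sortedVec V) := Tuple.monotone_sort V
    have hge : ∀ j : Fin n, c ≤ sortedVec V j := by
      intro j
      rcases lt_or_ge j i with hlt | hle
      · exact (hj j hlt).le
      · exact le_trans hi.le (hm hle)
    have hlt : ∑ j : Fin n, c < ∑ j, sortedVec V j :=
      Finset.sum_lt_sum (fun j _ => hge j) ⟨i, Finset.mem_univ i, hi⟩
    have hg : ∑ j, sortedVec V j = ∑ j, V j := Equiv.sum_comp (Tuple.sort V) V
    rw [hg, hsum, Finset.sum_const, Finset.card_univ, Fintype.card_fin,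
      nsmul_eq_mul] at hlt
    exact lt_irrefl _ hlt

/-- The true MAP of the counterexample: 3 agents, 3 unit-capacity objects.
Agents 0 and 1 accept everything; agent 2 accepts only object 2. -/
def exP : MAP 3 (Fin 3) where
  r := fun i k => decide (i.val ≠ 2 ∨ k.val = 2)
  q := fun _ => 1
  q_pos := fun _ => le_refl 1
  enough := by decide

/-- The misreport: agent 0 drops object 1, agent 1 drops object 0. -/
def exP' : MAP 3 (Fin 3) where
  r := fun i k => decide (k.val = 2 ∨ (i.val = k.val ∧ i.val ≤ 1))
  q := fun _ => 1
  q_pos := fun _ => le_refl 1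
  enough := by decide

/-- The egalitarian assignment for the true problem: the diagonal matrix. -/
noncomputable def exZ : Fin 3 → {k : Fin 3 // Overdemanded exP k} → ℝ :=
  fun i k => if (i : ℕ) = (k.1 : ℕ) then 1 else 0

/-- The egalitarian assignment for the misreported problem restricted to its
unique over-demanded object: everybody gets `1/3`. -/
noncomputable def exZ' : Fin 3 → {k : Fin 3 // Overdemanded exP' k} → ℝ :=
  fun _ _ => 1/3

/-- The refined egalitarian solution is not group strategy-proof:
there are a MAP, a nonempty coalition `S` and an IR misreport under which every member
of `S` weakly gains and some member strictly gains (in refined egalitarian utility). -/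
theorem refined_es_not_group_strategyproof :
    ∃ (n m : ℕ) (P P' : MAP n (Fin m)) (S : Finset (Fin n)),
      P'.q = P.q ∧ S.Nonempty ∧
      (∀ j ∉ S, ∀ k, P'.r j k = P.r j k) ∧
      (∀ i ∈ S, ∀ k, P'.r i k = true → P.r i k = true) ∧
      ∃ U U', LeximinMaximal (restrictO P) U ∧ LeximinMaximal (restrictO P') U' ∧
        (∀ i ∈ S, U i + (perfectCount P i : ℝ) ≤ U' i + (perfectCount P' i : ℝ)) ∧
        (∃ i ∈ S, U i + (perfectCount P i : ℝ) < U' i + (perfectCount P' i : ℝ)) := by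
  refine ⟨3, 3, exP, exP', {0, 1}, rfl, ⟨0, by decide⟩, by decide, by decide,
    (fun _ => 1), (fun _ => 1/3), ?_, ?_, ?_, ?_⟩
  · -- LeximinMaximal (restrictO exP) (fun _ => 1)
    have hall : ∀ k : Fin 3, Overdemanded exP k := by decide
    have hsub : ∀ x : Fin 3, x ∈ (Finset.univ : Finset (Fin 3)) ↔ Overdemanded exP x :=
      fun x => ⟨fun _ => hall x, fun _ => Finset.mem_univ x⟩
    have hu : ∀ i : Fin 3, util exZ i = 1 := by
      intro i
      have h1 : util exZ i = ∑ k : Fin 3, (if (i : ℕ) = (k : ℕ) then (1:ℝ) else 0) :=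
        (Finset.sum_subtype Finset.univ hsub
          (fun k : Fin 3 => if (i : ℕ) = (k : ℕ) then (1:ℝ) else 0)).symm
      rw [h1, Fin.sum_univ_three]
      fin_cases i <;> norm_num
    have hq : (∑ k : {k : Fin 3 // Overdemanded exP k}, ((restrictO exP).q k : ℝ)) = 3 := by
      have h1 : (∑ k : {k : Fin 3 // Overdemanded exP k}, ((restrictO exP).q k : ℝ))
          = ∑ k : Fin 3, ((exP.q k : ℝ)) :=
        (Finset.sum_subtype Finset.univ hsub (fun k : Fin 3 => ((exP.q k : ℝ)))).symm
      rw [h1]; norm_num [Fin.sum_univ_three, exP]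
    constructor
    · refine ⟨exZ, ⟨?_, ?_, ?_, ?_⟩, ?_, fun i => (hu i).symm⟩
      · intro i k; unfold exZ; split <;> norm_num
      · intro i k; unfold exZ; split <;> norm_num
      · intro k
        obtain ⟨kv, hk⟩ := k
        fin_cases kv <;> simp [exZ, Fin.sum_univ_three, restrictO, exP] <;> decide
      · intro i k hpos
        by_cases h : (i : ℕ) = (k.1 : ℕ)
        · show (restrictO exP).r i k = true
          simp only [restrictO, exP, decide_eq_true_eq]
          omega
        · exact absurd hpos (by unfold exZ; simp [h])
      · rw [Finset.sum_congr rfl (fun i _ => hu i), hq]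
        norm_num [Fin.sum_univ_three]
    · intro U'' hU'' hle
      obtain ⟨Z, hRAM, hs, hZ⟩ := hU''
      have hsum : ∑ i, U'' i = 3 * 1 := by
        rw [Finset.sum_congr rfl (fun i _ => hZ i), hs, hq]; norm_num
      exact leximinLE_const_symm 1 U'' (by simpa using hsum) hle
  · -- LeximinMaximal (restrictO exP') (fun _ => 1/3)
    have hsub : ∀ x : Fin 3, x ∈ ({2} : Finset (Fin 3)) ↔ Overdemanded exP' x := by decide
    have honly : ∀ x : Fin 3, Overdemanded exP' x → x = 2 := by decide
    have hu : ∀ i : Fin 3, util exZ' i = 1/3 := by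
      intro i
      have h1 : util exZ' i = ∑ k ∈ ({2} : Finset (Fin 3)), (1/3 : ℝ) :=
        (Finset.sum_subtype ({2} : Finset (Fin 3)) hsub (fun _ => (1/3 : ℝ)))
      rw [h1, Finset.sum_singleton]
    have hq : (∑ k : {k : Fin 3 // Overdemanded exP' k}, ((restrictO exP').q k : ℝ)) = 1 := by
      have h1 : (∑ k : {k : Fin 3 // Overdemanded exP' k}, ((restrictO exP').q k : ℝ))
          = ∑ k ∈ ({2} : Finset (Fin 3)), ((exP'.q k : ℝ)) :=
        (Finset.sum_subtype ({2} : Finset (Fin 3)) hsub (fun k : Fin 3 => ((exP'.q k : ℝ)))).symm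
      rw [h1, Finset.sum_singleton]; norm_num [exP']
    constructor
    · refine ⟨exZ', ⟨?_, ?_, ?_, ?_⟩, ?_, fun i => (hu i).symm⟩
      · intro i k; unfold exZ'; norm_num
      · intro i k; unfold exZ'; norm_num
      · intro k
        have hk2 : k.1 = 2 := honly k.1 k.2
        show (∑ _i : Fin 3, (1/3 : ℝ)) ≤ ((restrictO exP').q k : ℝ)
        rw [show (restrictO exP').q k = exP'.q k.1 from rfl, hk2]
        norm_num [exP', Fin.sum_univ_three]
      · intro i k _
        have hk2 : k.1 = 2 := honly k.1 k.2
        show exP'.r i k.1 = true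
        rw [hk2]
        fin_cases i <;> decide
      · rw [Finset.sum_congr rfl (fun i _ => hu i), hq]
        norm_num [Fin.sum_univ_three]
    · intro U'' hU'' hle
      obtain ⟨Z, hRAM, hs, hZ⟩ := hU''
      have hsum : ∑ i, U'' i = 3 * (1/3) := by
        rw [Finset.sum_congr rfl (fun i _ => hZ i), hs, hq]; norm_num
      exact leximinLE_const_symm (1/3) U'' (by simpa using hsum) hle
  · -- weak gain for everyone in the coalition
    have p0 : perfectCount exP 0 = 0 := by decide
    have p1 : perfectCount exP 1 = 0 := by decide
    have p0' : perfectCount exP' 0 = 1 := by decide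
    have p1' : perfectCount exP' 1 = 1 := by decide
    intro i hi
    fin_cases hi
    · rw [p0, p0']; norm_num
    · rw [p1, p1']; norm_num
  · -- strict gain for agent 0
    refine ⟨0, by decide, ?_⟩
    rw [show perfectCount exP 0 = 0 from by decide,
      show perfectCount exP' 0 = 1 from by decide]
    norm_num
end

section
/- For every MAP (R,q) and every coalition S ⊆ N, the maximum of Σ_{i∈S} Σ_{k∈M} z i k over all RAMs Z ∈ F(R,q) equals μ(S) = Σ_{k∈M} min(|{i ∈ S : r i k = 1}|, q k). Consequently, every efficient utility profile U ∈ U(R,q) satisfies Σ_{i∈N} U_i = Σ_{k∈M} q k and Σ_{i∈S} U_i ≤ μ(S) for every S ⊆ N, i.e. U(R,q) is contained in the core from above of the cooperative game (N, μ). -/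
open Finset

variable {n : ℕ} {M : Type*} [Fintype M]

lemma sum_util_le_coalValue {n : ℕ} {M : Type*} [Fintype M] (P : MAP n M)
    (Z : Fin n → M → ℝ) (hZ : IsRAM P Z) (S : Finset (Fin n)) :
    ∑ i ∈ S, util Z i ≤ (coalValue P.q P.r S : ℝ) := by
  obtain ⟨h0, h1, hq, hr⟩ := hZ
  simp only [util, coalValue]
  rw [Finset.sum_comm]
  push_cast
  refine Finset.sum_le_sum fun k _ => le_min ?_ ?_
  · have hfil : ∑ i ∈ S, Z i k = ∑ i ∈ S.filter (fun i => P.r i k = true), Z i k := by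
      rw [Finset.sum_filter_of_ne]
      intro i _ hne
      exact hr i k (lt_of_le_of_ne (h0 i k) (Ne.symm hne))
    rw [hfil]
    calc ∑ i ∈ S.filter (fun i => P.r i k = true), Z i k
        ≤ ∑ _i ∈ S.filter (fun i => P.r i k = true), (1 : ℝ) :=
          Finset.sum_le_sum fun i _ => h1 i k
      _ = _ := by simp
  · calc ∑ i ∈ S, Z i k ≤ ∑ i, Z i k :=
          Finset.sum_le_sum_of_subset_of_nonneg (Finset.subset_univ S)
            (fun i _ _ => h0 i k)
      _ ≤ (P.q k : ℝ) := hq k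

/-- For every MAP and every coalition `S`, the maximum of
`Σ_{i∈S} u_i(Z)` over RAMs `Z` equals `μ(S) = Σ_k min(|{i ∈ S : r i k = 1}|, q k)`;
consequently every efficient utility profile sums to `Σ_k q k` and satisfies
`Σ_{i∈S} U_i ≤ μ(S)` for every `S`, i.e. lies in the core from above of `(N, μ)`. -/
theorem coalition_max_eq_mu {n : ℕ} {M : Type*} [Fintype M] (P : MAP n M)
    (S : Finset (Fin n)) :
    IsGreatest {x : ℝ | ∃ Z, IsRAM P Z ∧ x = ∑ i ∈ S, util Z i}
      ((coalValue P.q P.r S : ℝ)) ∧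
    ∀ U ∈ effU P, (∑ i, U i = ∑ k, (P.q k : ℝ)) ∧
      ∀ S' : Finset (Fin n), ∑ i ∈ S', U i ≤ (coalValue P.q P.r S' : ℝ) := by
  have hmin : ∀ k : M, min ((S.filter fun i => P.r i k = true).card) (P.q k)
      ≤ (S.filter fun i => P.r i k = true).card := fun k => min_le_left _ _
  choose T hTsub hTcard using fun k => Finset.exists_subset_card_eq (hmin k)
  set Z : Fin n → M → ℝ := fun i k => if i ∈ T k then 1 else 0 with hZdef
  have hRAM : IsRAM P Z := by
    refine ⟨fun i k => by positivity, fun i k => by simp only [hZdef]; split <;> norm_num,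
      fun k => ?_, fun i k hpos => ?_⟩
    · have : ∑ i, Z i k = ((T k).card : ℝ) := by
        simp [hZdef, Finset.sum_ite_mem, Finset.univ_inter]
      rw [this, hTcard k]
      exact_mod_cast Nat.cast_le.mpr (min_le_right _ _)
    · have : i ∈ T k := by
        by_contra h; simp [hZdef, h] at hpos
      have := hTsub k this
      exact (Finset.mem_filter.mp this).2
  have hval : ∑ i ∈ S, util Z i = (coalValue P.q P.r S : ℝ) := by
    simp only [util, coalValue]
    rw [Finset.sum_comm]
    push_cast
    refine Finset.sum_congr rfl fun k _ => ?_
    have hTS : T k ⊆ S := (hTsub k).trans (Finset.filter_subset _ _)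
    have : ∑ i ∈ S, Z i k = ((T k).card : ℝ) := by
      rw [hZdef]
      rw [Finset.sum_ite_mem, Finset.inter_eq_right.mpr hTS]
      simp
    rw [this, hTcard k]
    push_cast
    rfl
  constructor
  · exact ⟨⟨Z, hRAM, hval.symm⟩, fun x ⟨W, hW, hx⟩ =>
      hx ▸ sum_util_le_coalValue P W hW S⟩
  · rintro U ⟨W, hW, hsum, hU⟩
    refine ⟨by simpa [hU] using hsum, fun S' => ?_⟩
    calc ∑ i ∈ S', U i = ∑ i ∈ S', util W i := Finset.sum_congr rfl fun i _ => hU i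
      _ ≤ _ := sum_util_le_coalValue P W hW S'
end

section
/- In every constrained competitive equilibrium prices of over-demanded objects are positive: for every MAP (R,q) and every CCE (Z*, p*) of (R,q), if an object k satisfies |{i ∈ N : r i k = 1}| > q k (k is over-demanded), then p*_k > 0. -/
open Finset

variable {n : ℕ} {M : Type*} [Fintype M]

/-- In every constrained competitive equilibrium, the price of every
over-demanded object is positive. -/
theorem cce_overdemanded_positive_price {n : ℕ} {M : Type*} [Fintype M] (P : MAP n M)
    (Z : Fin n → M → ℝ) (p : M → ℝ) (h : IsCCE P Z p) (k : M)
    (hk : P.q k < (Finset.univ.filter fun i => P.r i k = true).card) :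
    0 < p k := by
  classical
  by_contra hneg
  push_neg at hneg
  have hp0 : p k = 0 := le_antisymm hneg (h.2.1 k)
  obtain ⟨hRAM, hp, hopt⟩ := h
  have key : ∀ i, P.r i k = true → Z i k = 1 := by
    intro i hri
    by_contra hne
    have hlt : Z i k < 1 := lt_of_le_of_ne (hRAM.2.1 i k) hne
    set z : M → ℝ := fun k' => if k' = k then 1 else Z i k' with hz
    obtain ⟨⟨hb1, hb2, hb3, hb4⟩, hmax⟩ := hopt i
    have hbud : InBudget P p i z := by
      refine ⟨?_, ?_, ?_, ?_⟩
      · intro k'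
        by_cases hk' : k' = k
        · simp [hz, hk']
        · simpa [hz, hk'] using hb1 k'
      · intro k'
        by_cases hk' : k' = k
        · simp [hz, hk']
        · simpa [hz, hk'] using hb2 k'
      · intro k' hk0
        by_cases hk' : k' = k
        · simpa [hk'] using hri
        · exact hb3 k' (by simpa [hz, hk'] using hk0)
      · have : ∀ k', p k' * z k' = p k' * Z i k' := by
          intro k'
          by_cases hk' : k' = k
          · simp [hz, hk', hp0]
          · simp [hz, hk']
        calc ∑ k', p k' * z k' = ∑ k', p k' * Z i k' := Finset.sum_congr rfl fun k' _ => this k'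
          _ ≤ 1 := hb4
    have hgt : util Z i < ∑ k', z k' := by
      apply Finset.sum_lt_sum
      · intro k' _
        by_cases hk' : k' = k
        · simpa [hz, hk'] using hb2 k'
        · simp [hz, hk']
      · exact ⟨k, Finset.mem_univ k, by simpa [hz] using hlt⟩
    exact absurd (hmax z hbud) (not_le.mpr hgt)
  have hsum : (Finset.univ.filter fun i => P.r i k = true).card • (1:ℝ) ≤ ∑ i, Z i k := by
    rw [← Finset.sum_const]
    calc ∑ _i ∈ Finset.univ.filter (fun i => P.r i k = true), (1:ℝ)
        = ∑ i ∈ Finset.univ.filter (fun i => P.r i k = true), Z i k :=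
          Finset.sum_congr rfl fun i hi => (key i (Finset.mem_filter.mp hi).2).symm
      _ ≤ ∑ i, Z i k := Finset.sum_le_sum_of_subset_of_nonneg (Finset.filter_subset _ _)
          (fun i _ _ => hRAM.1 i k)
  have hle := hRAM.2.2.1 k
  have : ((Finset.univ.filter fun i => P.r i k = true).card : ℝ) ≤ (P.q k : ℝ) := by
    simpa using hsum.trans hle
  exact absurd (Nat.cast_lt.mpr hk) (not_lt.mpr this)
end
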